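/- Let G be a finite group and C₁, …, Cₙ cyclic subgroups of G. The induced characters (1_{C₁})^G, …, (1_{Cₙ})^G form a basis of the ℂ-subspace of class functions spanned by the rational-valued characters of G if and only if C₁, …, Cₙ is a complete set of representatives of the conjugacy classes of cyclic subgroups of G. -/

import Mathlib

/-- The induced character `(1_C)^G` of the trivial character of a subgroup `C`. -/
noncomputable def indTriv (G : Type) [Group G] [Fintype G] (C : Subgroup G) : G → ℂ :=
  fun g => (Nat.card {x : G // x⁻¹ * g * x ∈ C} : ℂ) / (Nat.card C : ℂ)

/-- `χ : G → ℂ` is a character: the trace of a nonzero finite-dimensional complex rep. -/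
def IsCharacter (G : Type) [Group G] (χ : G → ℂ) : Prop :=
  ∃ V : FDRep ℂ G, χ = V.character ∧ χ ≠ 0

/-- `χ` is an irreducible character of `G`. -/
def IsIrredChar (G : Type) [Group G] (χ : G → ℂ) : Prop :=
  ∃ V : FDRep ℂ G, CategoryTheory.Simple V ∧ χ = V.character

/-- All values of `χ` are rational. -/
def IsRatValued {G : Type} (χ : G → ℂ) : Prop := ∀ g : G, ∃ q : ℚ, χ g = (q : ℂ)

/-- Subgroups `H` and `K` are conjugate in `G`. -/
def SubConj {G : Type} [Group G] (H K : Subgroup G) : Prop :=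
  ∃ g : G, Subgroup.map (MulAut.conj g).toMonoidHom H = K

/-- The ℂ-subspace of `G → ℂ` spanned by the rational valued characters of `G`. -/
noncomputable def ratCharSpan (G : Type) [Group G] : Submodule ℂ (G → ℂ) :=
  Submodule.span ℂ {χ : G → ℂ | IsCharacter G χ ∧ IsRatValued χ}

/-- The number of conjugacy classes of cyclic subgroups of `G`. -/
noncomputable def numCyclicClasses (G : Type) [Group G] : ℕ :=
  Nat.card (Quot (fun H K : {H : Subgroup G // IsCyclic ↥H} => SubConj H.1 K.1))

/-- Indicator function of the set of `g` with `⟨g⟩` conjugate to `⟨x⟩`. -/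
noncomputable def Phi (G : Type) [Group G] (x : G) : G → ℂ := fun g =>
  letI := Classical.propDecidable
  if SubConj (Subgroup.zpowers g) (Subgroup.zpowers x) then 1 else 0

/-- The cyclotomic field `ℚ(e^{2πi/n})` as a subfield of `ℂ`. -/
noncomputable def cycField (n : ℕ) : IntermediateField ℚ ℂ :=
  IntermediateField.adjoin ℚ ({Complex.exp (2 * Real.pi * Complex.I / n)} : Set ℂ)

/-- `ψ` is in the `Gal(ℚ(ζ_n)/ℚ)`-orbit of `χ` (acting on character values). -/
def galRel (G : Type) [Group G] (n : ℕ) (χ ψ : G → ℂ) : Prop :=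
  ∃ σ : cycField n ≃ₐ[ℚ] cycField n,
    ∀ g : G, ∃ h : χ g ∈ cycField n, (σ ⟨χ g, h⟩ : ℂ) = ψ g

/-- The field `ℚ(χ)` generated by the values of `χ`. -/
noncomputable def charField (G : Type) (χ : G → ℂ) : IntermediateField ℚ ℂ :=
  IntermediateField.adjoin ℚ (Set.range χ)

/-- The rationalization `χ^rat = ∑_{σ ∈ Gal(ℚ(χ)/ℚ)} χ^σ`. -/
noncomputable def ratzn (G : Type) [Group G] (χ : G → ℂ) : G → ℂ :=
  fun g => ∑ᶠ σ : charField G χ ≃ₐ[ℚ] charField G χ,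
    (σ ⟨χ g, IntermediateField.subset_adjoin ℚ _ ⟨g, rfl⟩⟩ : ℂ)

/-- The induced character of a character `φ` of a subgroup `H`. -/
noncomputable def inducedChar (G : Type) [Group G] [Fintype G] (H : Subgroup G)
    (φ : H → ℂ) : G → ℂ := fun g =>
  letI := Classical.propDecidable
  (Nat.card H : ℂ)⁻¹ * ∑ x : G, if h : x⁻¹ * g * x ∈ H then φ ⟨x⁻¹ * g * x, h⟩ else 0

/-!
Call `g, h ∈ G` cyclically conjugate if `⟨g⟩` and `⟨h⟩` are conjugate subgroups; the classes of
this relation correspond to the conjugacy classes of cyclic subgroups.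

A rational-valued character `χ` is constant on these classes. If `ζ` is a primitive `|g|`-th root
of unity, the eigenvalue multiplicities of `g` give `p ∈ ℚ[X]` with `χ (g ^ k) = p (ζ ^ k)` for
all `k`. As `p ζ ∈ ℚ`, `ζ` is a root of `p - p ζ`, hence so is every `ζ ^ k` with `k` prime to
`|g|`, being a root of the cyclotomic polynomial, the minimal polynomial of `ζ`.

The permutation character `(1_⟨x⟩)^G` is rational-valued and vanishes off the elements conjugate
into `⟨x⟩`, which have order `< |x|` unless they are cyclically conjugate to `x`. By induction on
the order, the indicator of every class lies in the span of these characters. So the rational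
characters span exactly the functions constant on the classes, and `(1_C)^G` only depends on the
conjugacy class of `C`: the theorem becomes a dimension count.
-/
open Polynomial Pointwise

namespace Module.End

theorem pow_apply_of_mem_eigenspace {R M : Type*} [CommRing R] [AddCommGroup M] [Module R M]
    {A : Module.End R M} {μ : R} {v : M} (hv : v ∈ A.eigenspace μ) (j : ℕ) :
    (A ^ j) v = μ ^ j • v := by
  induction j with
  | zero => simp
  | succ j ih => rw [pow_succ', mul_apply, ih, map_smul, mem_eigenspace_iff.1 hv, smul_smul,
      ← pow_succ]

theorem HasEigenvalue.pow_eq_one {K V : Type*} [Field K] [AddCommGroup V] [Module K V]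
    {A : Module.End K V} {μ : K} (hμ : A.HasEigenvalue μ) {m : ℕ} (hA : A ^ m = 1) : μ ^ m = 1 := by
  obtain ⟨v, hv, hv0⟩ := hμ.exists_hasEigenvector
  have hvm : (μ ^ m - 1) • v = 0 := by
    rw [sub_smul, ← pow_apply_of_mem_eigenspace hv, hA, one_smul, one_apply, sub_self]
  exact sub_eq_zero.1 ((smul_eq_zero.1 hvm).resolve_right hv0)

/-- The multiplicities of the eigenvalues `ζ ^ k` of `A` are the coefficients of `p`. -/
theorem exists_trace_pow_eq_aeval_of_pow_eq_one {V : Type*} [AddCommGroup V] [Module ℂ V]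
    [FiniteDimensional ℂ V] {A : Module.End ℂ V} {m : ℕ} [NeZero m] (hA : A ^ m = 1) {ζ : ℂ}
    (hζ : IsPrimitiveRoot ζ m) :
    ∃ p : ℚ[X], ∀ j : ℕ, LinearMap.trace ℂ V (A ^ j) = aeval (ζ ^ j) p := by
  have hss : A.IsSemisimple :=
    isSemisimple_of_squarefree_aeval_eq_zero
      (separable_X_pow_sub_C (n := m) (1 : ℂ) (by simp [NeZero.ne]) one_ne_zero).squarefree
      (by simp [hA])
  have hint : DirectSum.IsInternal A.eigenspace :=
    DirectSum.isInternal_submodule_of_iSupIndep_of_iSup_eq_top A.eigenspaces_iSupIndep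
      hss.iSup_eigenspace_eq_top
  have hfin : {μ | A.eigenspace μ ≠ ⊥}.Finite :=
    WellFoundedGT.finite_ne_bot_of_iSupIndep A.eigenspaces_iSupIndep
  choose! k hk using fun μ (hμ : A.HasEigenvalue μ) =>
    (hζ.eq_pow_of_pow_eq_one (hμ.pow_eq_one hA)).imp fun _ => And.right
  refine ⟨∑ μ ∈ hfin.toFinset, C (Module.finrank ℂ (A.eigenspace μ) : ℚ) * X ^ k μ, fun j => ?_⟩
  have hmaps : ∀ μ, Set.MapsTo (A ^ j) (A.eigenspace μ) (A.eigenspace μ) := fun μ v hv => by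
    rw [SetLike.mem_coe, pow_apply_of_mem_eigenspace hv]
    exact Submodule.smul_mem _ _ hv
  rw [LinearMap.trace_eq_sum_trace_restrict' hint hfin hmaps, map_sum]
  refine Finset.sum_congr rfl fun μ hμ => ?_
  have hres : (A ^ j).restrict (hmaps μ) = μ ^ j • LinearMap.id := by
    ext ⟨v, hv⟩
    exact pow_apply_of_mem_eigenspace hv j
  rw [hres, map_smul, LinearMap.trace_id, smul_eq_mul, map_mul, aeval_C, map_pow, aeval_X,
    ← pow_mul, mul_comm j, pow_mul, hk μ (hasEigenvalue_iff.2 (by simpa using hμ))]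
  simp [mul_comm]

end Module.End

theorem LinearMap.trace_funLeft {R X : Type*} [CommRing R] [Finite X] (σ : X → X) :
    LinearMap.trace R (X → R) (LinearMap.funLeft R R σ) = Nat.card {x // σ x = x} := by
  classical
  have := Fintype.ofFinite X
  rw [LinearMap.trace_eq_matrix_trace R (Pi.basisFun R X), Matrix.trace, Nat.card_eq_fintype_card,
    Fintype.card_subtype, ← Finset.sum_boole]
  simp [LinearMap.funLeft_apply, Pi.single_apply, eq_comm]

theorem Submodule.mem_of_triangular {K M ι : Type*} [DivisionRing K] [AddCommGroup M] [Module K M]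
    {p : Submodule K M} {δ v : ι → M} (r : ι → ℕ) (hv : ∀ i, v i ∈ p)
    (htri : ∀ i, ∃ c : K, c ≠ 0 ∧ v i - c • δ i ∈ span K (δ '' {j | r j < r i})) (i : ι) :
    δ i ∈ p := by
  induction hi : r i using Nat.strong_induction_on generalizing i with
  | _ n ih =>
    obtain ⟨c, hc, hmem⟩ := htri i
    have hspan : span K (δ '' {j | r j < r i}) ≤ p :=
      span_le.2 <| Set.image_subset_iff.2 fun j hj => ih _ (hi ▸ hj) j rfl
    have : c • δ i ∈ p := by simpa using p.sub_mem (hv i) (hspan hmem)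
    exact (p.smul_mem_iff hc).1 this

theorem Nat.Coprime.of_orderOf_pow_eq {M : Type*} [Monoid M] {x : M} (hx : IsOfFinOrder x) {k : ℕ}
    (h : orderOf (x ^ k) = orderOf x) : k.Coprime (orderOf x) := by
  rcases Nat.eq_zero_or_pos k with rfl | hk
  · rw [pow_zero, orderOf_one] at h
    simp [← h]
  · rw [orderOf_pow' x hk.ne', Nat.div_eq_self] at h
    exact Nat.coprime_comm.1 (h.resolve_left hx.orderOf_pos.ne')

theorem IsPrimitiveRoot.aeval_pow_eq_of_coprime {K : Type*} [Field K] [CharZero K] {ζ : K} {m : ℕ}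
    [NeZero m] (hζ : IsPrimitiveRoot ζ m) {p : ℚ[X]} {q : ℚ} (hp : aeval ζ p = q) {k : ℕ}
    (hk : k.Coprime m) : aeval (ζ ^ k) p = q := by
  obtain ⟨r, hr⟩ : minpoly ℚ ζ ∣ p - C q := minpoly.dvd ℚ ζ (by simp [hp])
  rw [← cyclotomic_eq_minpoly_rat hζ (NeZero.pos m)] at hr
  have hroot : aeval (ζ ^ k) (cyclotomic m ℚ) = 0 := by
    rw [aeval_def, eval₂_eq_eval_map, map_cyclotomic]
    exact (hζ.pow_of_coprime k hk).isRoot_cyclotomic (NeZero.pos m)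
  have : aeval (ζ ^ k) (p - C q) = 0 := by rw [hr, map_mul, hroot, zero_mul]
  simpa [sub_eq_zero] using this

theorem FDRep.character_pow_eq_of_coprime {G : Type} [Group G] (V : FDRep ℂ G) {g : G}
    (hg : IsOfFinOrder g) {q : ℚ} (hq : V.character g = q) {k : ℕ} (hk : k.Coprime (orderOf g)) :
    V.character (g ^ k) = q := by
  have : NeZero (orderOf g) := ⟨hg.orderOf_pos.ne'⟩
  have hζ := Complex.isPrimitiveRoot_exp (orderOf g) (NeZero.ne _)
  obtain ⟨p, hp⟩ := Module.End.exists_trace_pow_eq_aeval_of_pow_eq_one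
    (A := V.ρ g) (by rw [← map_pow, pow_orderOf_eq_one, map_one]) hζ
  have hchar : ∀ j : ℕ, V.character (g ^ j) = aeval (_ ^ j) p := fun j => by
    rw [FDRep.character, map_pow, hp]
  rw [hchar]
  refine hζ.aeval_pow_eq_of_coprime ?_ hk
  rw [← pow_one (Complex.exp _), ← hchar 1, pow_one]
  exact hq

theorem FDRep.character_eq_of_zpowers_eq {G : Type} [Group G] (V : FDRep ℂ G) {g h : G}
    (hg : IsOfFinOrder g) (hV : ∃ q : ℚ, V.character g = q)
    (hgh : Subgroup.zpowers g = Subgroup.zpowers h) : V.character h = V.character g := by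
  obtain ⟨q, hq⟩ := hV
  obtain ⟨k, rfl⟩ : h ∈ Submonoid.powers g :=
    hg.mem_powers_iff_mem_zpowers.2 (hgh ▸ Subgroup.mem_zpowers h)
  have hk : orderOf (g ^ k) = orderOf g := by rw [← Nat.card_zpowers, ← hgh, Nat.card_zpowers]
  rw [hq, V.character_pow_eq_of_coprime hg hq (.of_orderOf_pow_eq hg hk)]

section ConjugateSubgroups

variable {G : Type} [Group G]

theorem subConj_iff_mem_orbit {H K : Subgroup G} :
    SubConj H K ↔ K ∈ MulAction.orbit (ConjAct G) H :=
  ⟨fun ⟨g, hg⟩ => ⟨ConjAct.toConjAct g, hg⟩, fun ⟨c, hc⟩ => ⟨ConjAct.ofConjAct c, hc⟩⟩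

theorem ConjAct.smul_zpowers (c : ConjAct G) (x : G) :
    c • Subgroup.zpowers x = Subgroup.zpowers (c • x) :=
  MonoidHom.map_zpowers _ x

theorem ConjAct.card_smul_subgroup (c : ConjAct G) (H : Subgroup G) :
    Nat.card (c • H : Subgroup G) = Nat.card H :=
  (Nat.card_congr (Subgroup.equivSMul c H).toEquiv).symm

theorem ConjAct.orderOf_smul (c : ConjAct G) (x : G) : orderOf (c • x) = orderOf x := by
  rw [← Nat.card_zpowers, ← Nat.card_zpowers, ← ConjAct.smul_zpowers, ConjAct.card_smul_subgroup]

end ConjugateSubgroups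

section CyclicClasses

variable {G : Type} [Group G]

/-- `g ≈ h` iff the cyclic subgroups `⟨g⟩` and `⟨h⟩` are conjugate. -/
def cyclicConj (G : Type) [Group G] : Setoid G :=
  (MulAction.orbitRel (ConjAct G) (Subgroup G)).comap Subgroup.zpowers

abbrev CyclicClass (G : Type) [Group G] : Type := Quotient (cyclicConj G)

theorem cyclicConj_iff {g h : G} :
    cyclicConj G g h ↔ ∃ c : ConjAct G, Subgroup.zpowers (c • h) = Subgroup.zpowers g := by
  rw [cyclicConj, Setoid.comap_rel, MulAction.orbitRel_apply]
  simp only [MulAction.mem_orbit_iff, ConjAct.smul_zpowers]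

theorem CyclicClass.mk_eq_mk_iff {g h : G} :
    (⟦g⟧ : CyclicClass G) = ⟦h⟧ ↔ SubConj (Subgroup.zpowers h) (Subgroup.zpowers g) := by
  rw [Quotient.eq, subConj_iff_mem_orbit]
  rfl

theorem FDRep.character_eq_of_cyclicConj [Finite G] (V : FDRep ℂ G) (hV : IsRatValued V.character)
    {g h : G} (hgh : cyclicConj G g h) : V.character g = V.character h := by
  obtain ⟨c, hc⟩ := cyclicConj_iff.1 hgh
  rw [← V.character_eq_of_zpowers_eq (isOfFinOrder_of_finite _) (hV _) hc.symm, ConjAct.smul_def,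
    FDRep.char_conj]

end CyclicClasses

section PermutationCharacter

variable {G : Type} [Group G]

noncomputable def permRep (X : Type*) [MulAction G X] : Representation ℂ G (X → ℂ) where
  toFun g := LinearMap.funLeft ℂ ℂ (g⁻¹ • ·)
  map_one' := by ext; simp
  map_mul' g h := by ext; simp [mul_smul]

theorem card_conj_mem_eq (C : Subgroup G) (g : G) :
    Nat.card {x : G // x⁻¹ * g * x ∈ C} = Nat.card C * Nat.card {z : G ⧸ C // g⁻¹ • z = z} := by
  have e : {x : G // x⁻¹ * g * x ∈ C} ≃ (QuotientGroup.mk ⁻¹' {z : G ⧸ C | g⁻¹ • z = z}) :=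
    Equiv.subtypeEquivRight fun x => by
      simp [MulAction.Quotient.smul_mk, QuotientGroup.eq, mul_assoc]
  rw [Nat.card_congr (e.trans (QuotientGroup.preimageMkEquivSubgroupProdSet C _)), Nat.card_prod]
  rfl

variable [Fintype G]

theorem indTriv_eq_character (C : Subgroup G) :
    indTriv G C = (FDRep.of (permRep (G ⧸ C))).character := by
  funext g
  rw [indTriv, card_conj_mem_eq, Nat.cast_mul,
    mul_div_cancel_left₀ _ (Nat.cast_ne_zero.2 Nat.card_pos.ne')]
  exact (LinearMap.trace_funLeft _).symm

theorem indTriv_ne_zero_iff {C : Subgroup G} {g : G} :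
    indTriv G C g ≠ 0 ↔ ∃ z : G, z⁻¹ * g * z ∈ C := by
  simpa [indTriv, Nat.card_ne_zero, Subtype.finite] using fun _ _ => ⟨1, C.one_mem⟩

theorem isCharacter_indTriv (C : Subgroup G) : IsCharacter G (indTriv G C) :=
  ⟨_, indTriv_eq_character C, fun h => indTriv_ne_zero_iff.2 ⟨1, by simp⟩ (congrFun h 1)⟩

theorem isRatValued_indTriv (C : Subgroup G) : IsRatValued (indTriv G C) := fun g =>
  ⟨Nat.card {x : G // x⁻¹ * g * x ∈ C} / Nat.card C, by simp [indTriv]⟩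

theorem indTriv_mem_ratCharSpan (C : Subgroup G) : indTriv G C ∈ ratCharSpan G :=
  Submodule.subset_span ⟨isCharacter_indTriv C, isRatValued_indTriv C⟩

theorem indTriv_smul (c : ConjAct G) (C : Subgroup G) : indTriv G (c • C) = indTriv G C := by
  funext g
  have e : {x : G // x⁻¹ * g * x ∈ C} ≃ {x : G // x⁻¹ * g * x ∈ c • C} :=
    (Equiv.mulRight (ConjAct.ofConjAct c)⁻¹).subtypeEquiv fun x => by
      rw [← Subgroup.smul_mem_pointwise_smul_iff (a := c), ConjAct.smul_def]
      simp [mul_assoc]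
  rw [indTriv, indTriv, Nat.card_congr e, ConjAct.card_smul_subgroup]

theorem indTriv_eq_of_subConj {C C' : Subgroup G} (h : SubConj C C') :
    indTriv G C = indTriv G C' := by
  obtain ⟨c, rfl⟩ := subConj_iff_mem_orbit.1 h
  exact (indTriv_smul c C).symm

theorem indTriv_zpowers_eq_of_mk_eq {x y : G} (h : (⟦x⟧ : CyclicClass G) = ⟦y⟧) :
    indTriv G (Subgroup.zpowers y) = indTriv G (Subgroup.zpowers x) :=
  indTriv_eq_of_subConj (CyclicClass.mk_eq_mk_iff.1 h)

end PermutationCharacter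

section CyclicClassFunctions

variable {G : Type} [Group G]

/-- Its range is the space of functions on `G` constant on cyclic classes. -/
noncomputable def ofCyclicClass (G : Type) [Group G] : (CyclicClass G → ℂ) →ₗ[ℂ] G → ℂ :=
  LinearMap.funLeft ℂ ℂ (Quotient.mk _)

open scoped Classical in
noncomputable def cyclicIndicator (q : CyclicClass G) : G → ℂ := ofCyclicClass G (Pi.single q 1)

theorem mem_range_ofCyclicClass {f : G → ℂ} (hf : ∀ g h, cyclicConj G g h → f g = f h) :
    f ∈ LinearMap.range (ofCyclicClass G) :=
  ⟨Quotient.lift f hf, rfl⟩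

open scoped Classical in
theorem ofCyclicClass_mem_span [Finite G] (F : CyclicClass G → ℂ) :
    ofCyclicClass G F ∈ Submodule.span ℂ (cyclicIndicator '' {q | F q ≠ 0}) := by
  have := Fintype.ofFinite (CyclicClass G)
  have hF : ofCyclicClass G F = ∑ q, F q • cyclicIndicator q := by
    conv_lhs => rw [← Finset.univ_sum_single F, map_sum]
    refine Finset.sum_congr rfl fun q _ => ?_
    rw [cyclicIndicator, ← map_smul, ← Pi.single_smul', smul_eq_mul, mul_one]
  rw [hF]
  refine Submodule.sum_mem _ fun q _ => ?_
  by_cases hq : F q = 0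
  · simp [hq]
  · exact Submodule.smul_mem _ _ (Submodule.subset_span ⟨q, hq, rfl⟩)

theorem finrank_range_ofCyclicClass [Finite G] :
    Module.finrank ℂ (LinearMap.range (ofCyclicClass G)) = Nat.card (CyclicClass G) := by
  have := Fintype.ofFinite (CyclicClass G)
  have hinj : Function.Injective (ofCyclicClass G) :=
    LinearMap.funLeft_injective_of_surjective _ _ _ Quotient.mk_surjective
  rw [LinearMap.finrank_range_of_inj hinj, Module.finrank_fintype_fun_eq_card,
    Nat.card_eq_fintype_card]

theorem ratCharSpan_le_range [Finite G] : ratCharSpan G ≤ LinearMap.range (ofCyclicClass G) :=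
  Submodule.span_le.2 fun _ ⟨⟨V, hV, _⟩, hrat⟩ =>
    mem_range_ofCyclicClass (hV ▸ fun _ _ => V.character_eq_of_cyclicConj (hV ▸ hrat))

end CyclicClassFunctions

section Triangularity

variable {G : Type} [Group G] [Fintype G]

theorem orderOf_lt_of_indTriv_zpowers_ne_zero {g y : G}
    (h : indTriv G (Subgroup.zpowers y) g ≠ 0) (hne : (⟦g⟧ : CyclicClass G) ≠ ⟦y⟧) :
    orderOf g < orderOf y := by
  obtain ⟨z, hz⟩ := indTriv_ne_zero_iff.1 h
  set c := ConjAct.toConjAct z⁻¹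
  have hle : Subgroup.zpowers (c • g) ≤ Subgroup.zpowers y :=
    Subgroup.zpowers_le.2 (by simpa [c, ConjAct.smul_def] using hz)
  have hcard := Subgroup.card_le_of_le hle
  rw [Nat.card_zpowers, Nat.card_zpowers, ConjAct.orderOf_smul] at hcard
  refine hcard.lt_of_ne fun heq => hne (Quotient.sound (cyclicConj_iff.2 ⟨c, ?_⟩)).symm
  exact Subgroup.eq_of_le_of_card_ge hle (by rw [Nat.card_zpowers, Nat.card_zpowers,
    ConjAct.orderOf_smul, heq])

open scoped Classical in
theorem indTriv_zpowers_sub_mem_span (q : CyclicClass G) :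
    indTriv G (Subgroup.zpowers q.out) -
        indTriv G (Subgroup.zpowers q.out) q.out • cyclicIndicator q ∈
      Submodule.span ℂ (cyclicIndicator '' {q' | orderOf q'.out < orderOf q.out}) := by
  obtain ⟨F, hF⟩ := ratCharSpan_le_range (indTriv_mem_ratCharSpan (Subgroup.zpowers q.out))
  have hFq : ∀ q', F q' = indTriv G (Subgroup.zpowers q.out) q'.out := fun q' => by
    rw [← hF, ofCyclicClass, LinearMap.funLeft_apply, Quotient.out_eq]
  set c := indTriv G (Subgroup.zpowers q.out) q.out
  rw [← hF, cyclicIndicator, ← map_smul, ← map_sub]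
  refine Submodule.span_mono (Set.image_mono fun q' hq' => ?_) (ofCyclicClass_mem_span _)
  replace hq' : F q' - c * (Pi.single q 1 : CyclicClass G → ℂ) q' ≠ 0 := hq'
  by_cases hqq : q' = q
  · subst hqq
    rw [hFq, Pi.single_eq_same, mul_one, sub_self] at hq'
    exact (hq' rfl).elim
  · rw [Pi.single_eq_of_ne hqq, mul_zero, sub_zero, hFq] at hq'
    exact orderOf_lt_of_indTriv_zpowers_ne_zero hq' (by rwa [Quotient.out_eq, Quotient.out_eq])

theorem range_ofCyclicClass_le {p : Submodule ℂ (G → ℂ)}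
    (hp : ∀ y : G, indTriv G (Subgroup.zpowers y) ∈ p) : LinearMap.range (ofCyclicClass G) ≤ p := by
  rintro _ ⟨F, rfl⟩
  refine Submodule.span_le.2 ?_ (ofCyclicClass_mem_span F)
  rintro _ ⟨q, -, rfl⟩
  refine Submodule.mem_of_triangular (δ := cyclicIndicator)
    (v := fun q => indTriv G (Subgroup.zpowers q.out)) (fun q => orderOf q.out) (fun q => hp q.out)
    (fun q => ⟨_, indTriv_ne_zero_iff.2 ⟨1, by simp⟩, indTriv_zpowers_sub_mem_span q⟩) q

theorem ratCharSpan_eq_range : ratCharSpan G = LinearMap.range (ofCyclicClass G) :=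
  ratCharSpan_le_range.antisymm (range_ofCyclicClass_le fun _ => indTriv_mem_ratCharSpan _)

theorem finrank_ratCharSpan : Module.finrank ℂ (ratCharSpan G) = Nat.card (CyclicClass G) := by
  rw [ratCharSpan_eq_range, finrank_range_ofCyclicClass]

end Triangularity

theorem forall_existsUnique_subConj_iff_bijective {G : Type} [Group G] {ι : Type*} (x : ι → G) :
    (∀ H : Subgroup G, IsCyclic H → ∃! i, SubConj H (Subgroup.zpowers (x i))) ↔
      Function.Bijective fun i => (⟦x i⟧ : CyclicClass G) := by
  simp only [Function.bijective_iff_existsUnique, Quotient.forall, CyclicClass.mk_eq_mk_iff]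
  refine ⟨fun h y => h _ inferInstance, fun h H hH => ?_⟩
  obtain ⟨y, rfl⟩ := (H.isCyclic_iff_exists_zpowers_eq_top).1 hH
  exact h y

theorem stmt2 (G : Type) [Group G] [Fintype G] (n : ℕ) (C : Fin n → Subgroup G)
    (hC : ∀ i, IsCyclic ↥(C i)) :
    (LinearIndependent ℂ (fun i => indTriv G (C i)) ∧
        Submodule.span ℂ (Set.range fun i => indTriv G (C i)) = ratCharSpan G) ↔
      ∀ H : Subgroup G, IsCyclic ↥H → ∃! i, SubConj H (C i) := by
  choose x hx using fun i => (C i).isCyclic_iff_exists_zpowers_eq_top.1 (hC i)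
  obtain rfl : (fun i => Subgroup.zpowers (x i)) = C := funext hx
  have hle : Submodule.span ℂ (Set.range fun i => indTriv G (Subgroup.zpowers (x i))) ≤
      ratCharSpan G :=
    Submodule.span_le.2 (Set.range_subset_iff.2 fun i => indTriv_mem_ratCharSpan _)
  rw [forall_existsUnique_subConj_iff_bijective, Nat.bijective_iff_injective_and_card,
    Nat.card_fin, ← finrank_ratCharSpan]
  constructor
  · rintro ⟨hli, hspan⟩
    refine ⟨fun i j h => hli.injective (indTriv_zpowers_eq_of_mk_eq h).symm, ?_⟩
    rw [← hspan, finrank_span_eq_card hli, Fintype.card_fin]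
  · rintro ⟨hinj, hcard⟩
    have hsurj := ((Nat.bijective_iff_injective_and_card _).2
      ⟨hinj, by rw [Nat.card_fin, hcard, finrank_ratCharSpan]⟩).2
    have hspan := hle.antisymm <| ratCharSpan_eq_range.trans_le <|
      range_ofCyclicClass_le fun y => by
        obtain ⟨i, hi⟩ := hsurj ⟦y⟧
        exact indTriv_zpowers_eq_of_mk_eq hi ▸ Submodule.subset_span ⟨i, rfl⟩
    refine ⟨linearIndependent_iff_card_eq_finrank_span.2 ?_, hspan⟩
    rw [Fintype.card_fin, Set.finrank, hspan, hcard]
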